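/- arXiv:1601.02380 — 3 statements merged into one kernel-verified Lean document; each statement's English description precedes it below -/
import Mathlib

section
/- Let a, b ≥ 0 with (a, b) ≠ (0, 0) and t ∈ [0, 1]. The maximum over β ∈ [0, 1] of g(β) = β² a² + (1−β²) b² + 2β√(1−β²)·a·b·t is achieved at β² = (1/2)[1 + (a² − b²)/√((a² − b²)² + 4 a² b² t²)], and the maximum value equals (a² + b² + √((a² − b²)² + 4a²b²t²))/2. -/
/-!
Put `p = a²`, `q = b²`, `r = abt` and `β = cos θ`. Then `g(β)` is the quadratic form of the
symmetric matrix `[[p, r], [r, q]]` at the unit vector `(cos θ, sin θ)`, and the double-angle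
formulas turn it into `(p + q + (p - q) cos 2θ + 2r sin 2θ) / 2`. By Cauchy–Schwarz this is at most
`(p + q + √((p - q)² + 4r²)) / 2`, the larger eigenvalue, with equality exactly when
`(cos 2θ, sin 2θ)` is the unit vector along `(p - q, 2r)`; since `r ≥ 0` this direction is reached
with `θ ∈ [0, π/2]`, and `cos 2θ = (p - q)/√((p - q)² + 4r²)` is the stated value of `β²`.
-/

open Real Set

/-- The quadratic form of `[[p, r], [r, q]]` at the unit vector `(β, √(1 - β²))`. -/
noncomputable def quadFormArc (p q r β : ℝ) : ℝ :=
  β ^ 2 * p + (1 - β ^ 2) * q + 2 * β * √(1 - β ^ 2) * r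

theorem quadFormArc_eq_double_angle (p q r β : ℝ) :
    quadFormArc p q r β =
      (p + q + ((2 * β ^ 2 - 1) * (p - q) + 2 * β * √(1 - β ^ 2) * (2 * r))) / 2 := by
  unfold quadFormArc
  ring

theorem two_mul_sq_sub_one_sq_add_sq {β : ℝ} (hβ : β ^ 2 ≤ 1) :
    (2 * β ^ 2 - 1) ^ 2 + (2 * β * √(1 - β ^ 2)) ^ 2 = 1 := by
  linear_combination 4 * β ^ 2 * Real.sq_sqrt (sub_nonneg.2 hβ)

theorem mul_add_mul_le_sqrt_sq_add_sq {c s : ℝ} (h : c ^ 2 + s ^ 2 = 1) (u v : ℝ) :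
    c * u + s * v ≤ √(u ^ 2 + v ^ 2) :=
  (le_abs_self _).trans <| Real.abs_le_sqrt <| by
    linear_combination (u ^ 2 + v ^ 2) * h + sq_nonneg (c * v - s * u)

theorem quadFormArc_le (p q r : ℝ) {β : ℝ} (hβ : β ^ 2 ≤ 1) :
    quadFormArc p q r β ≤ (p + q + √((p - q) ^ 2 + 4 * r ^ 2)) / 2 := by
  have h := mul_add_mul_le_sqrt_sq_add_sq (two_mul_sq_sub_one_sq_add_sq hβ) (p - q) (2 * r)
  rw [mul_pow, show (2 : ℝ) ^ 2 = 4 by norm_num] at h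
  rw [quadFormArc_eq_double_angle]
  linarith

theorem div_sqrt_sq_add_mem_Icc (u w : ℝ) (hw : 0 ≤ w) : u / √(u ^ 2 + w) ∈ Icc (-1) 1 := by
  have h : |u| / √(u ^ 2 + w) ≤ 1 :=
    div_le_one_of_le₀ (Real.abs_le_sqrt (by linarith)) (Real.sqrt_nonneg _)
  rwa [← abs_of_nonneg (Real.sqrt_nonneg (u ^ 2 + w)), ← abs_div, abs_le] at h

theorem sqrt_half_one_add_mem_Icc {x : ℝ} (hx : x ∈ Icc (-1) 1) :
    √((1 / 2) * (1 + x)) ∈ Icc 0 1 :=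
  ⟨Real.sqrt_nonneg _, Real.sqrt_le_one.2 (by linarith [hx.2])⟩

theorem two_mul_sqrt_half_one_add_mul_sqrt {x : ℝ} (hx : x ∈ Icc (-1) 1) :
    2 * √((1 / 2) * (1 + x)) * √(1 - √((1 / 2) * (1 + x)) ^ 2) = √(1 - x ^ 2) := by
  have h : 0 ≤ (1 / 2) * (1 + x) := by linarith [hx.1]
  rw [Real.sq_sqrt h, mul_assoc, ← Real.sqrt_mul h,
    show 1 - x ^ 2 = 2 ^ 2 * ((1 / 2) * (1 + x) * (1 - (1 / 2) * (1 + x))) by ring,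
    Real.sqrt_mul (show (0 : ℝ) ≤ 2 ^ 2 by norm_num), Real.sqrt_sq zero_le_two]

/-- Equality case of `mul_add_mul_le_sqrt_sq_add_sq` along the direction of `(u, v)`. -/
theorem div_mul_add_sqrt_one_sub_sq_mul {u v : ℝ} (hv : 0 ≤ v) :
    u / √(u ^ 2 + v ^ 2) * u + √(1 - (u / √(u ^ 2 + v ^ 2)) ^ 2) * v = √(u ^ 2 + v ^ 2) := by
  set D := √(u ^ 2 + v ^ 2)
  have hD2 : D ^ 2 = u ^ 2 + v ^ 2 := Real.sq_sqrt (by positivity)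
  rcases (show 0 ≤ D from Real.sqrt_nonneg _).eq_or_lt with hD0 | hDpos
  · have hu : u = 0 := by nlinarith
    have hv0 : v = 0 := by nlinarith
    simp [hu, hv0, ← hD0]
  · have hsin : √(1 - (u / D) ^ 2) = v / D := by
      rw [← Real.sqrt_sq (div_nonneg hv hDpos.le)]
      congr 1
      field_simp
      linear_combination hD2
    rw [hsin]
    field_simp
    linear_combination -hD2

theorem quadFormArc_sqrt_half_one_add_div (p q : ℝ) {r : ℝ} (hr : 0 ≤ r) :
    quadFormArc p q r √((1 / 2) * (1 + (p - q) / √((p - q) ^ 2 + 4 * r ^ 2))) =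
      (p + q + √((p - q) ^ 2 + 4 * r ^ 2)) / 2 := by
  have hx := div_sqrt_sq_add_mem_Icc (p - q) (4 * r ^ 2) (by positivity)
  have key := div_mul_add_sqrt_one_sub_sq_mul (u := p - q) (mul_nonneg zero_le_two hr)
  rw [mul_pow, show (2 : ℝ) ^ 2 = 4 by norm_num] at key
  rw [quadFormArc_eq_double_angle, two_mul_sqrt_half_one_add_mul_sqrt hx,
    Real.sq_sqrt (by linarith [hx.1])]
  linear_combination key / 2

theorem stmt8_general (a b t : ℝ) (ha : 0 ≤ a) (hb : 0 ≤ b)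
    (ht : t ∈ Set.Icc (0 : ℝ) 1)
    (g : ℝ → ℝ)
    (hg : g = fun β => β^2 * a^2 + (1 - β^2) * b^2 +
      2 * β * Real.sqrt (1 - β^2) * a * b * t)
    (βopt : ℝ) (hβopt : βopt = Real.sqrt ((1/2) * (1 +
      (a^2 - b^2) / Real.sqrt ((a^2 - b^2)^2 + 4 * a^2 * b^2 * t^2)))) :
    βopt ∈ Set.Icc (0 : ℝ) 1 ∧
    βopt^2 = (1/2) * (1 + (a^2 - b^2) / Real.sqrt ((a^2 - b^2)^2 + 4 * a^2 * b^2 * t^2)) ∧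
    g βopt = (a^2 + b^2 + Real.sqrt ((a^2 - b^2)^2 + 4 * a^2 * b^2 * t^2)) / 2 ∧
    ∀ β ∈ Set.Icc (0 : ℝ) 1,
      g β ≤ (a^2 + b^2 + Real.sqrt ((a^2 - b^2)^2 + 4 * a^2 * b^2 * t^2)) / 2 := by
  have hr : 0 ≤ a * b * t := mul_nonneg (mul_nonneg ha hb) ht.1
  have hg' : g = quadFormArc (a ^ 2) (b ^ 2) (a * b * t) := by
    subst hg
    funext β
    unfold quadFormArc
    ring
  subst hβopt
  rw [hg', show 4 * a ^ 2 * b ^ 2 * t ^ 2 = 4 * (a * b * t) ^ 2 by ring]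
  have hx := div_sqrt_sq_add_mem_Icc (a ^ 2 - b ^ 2) (4 * (a * b * t) ^ 2) (by positivity)
  exact ⟨sqrt_half_one_add_mem_Icc hx, Real.sq_sqrt (by linarith [hx.1]),
    quadFormArc_sqrt_half_one_add_div _ _ hr,
    fun β hβ => quadFormArc_le _ _ _ (pow_le_one₀ hβ.1 hβ.2)⟩

/-- Optimal power allocation for a two-path channel with orthogonal transmit
steering vectors: the maximum over `β ∈ [0,1]` of
`g(β) = β²a² + (1−β²)b² + 2β√(1−β²)abt` is `(a² + b² + √((a²−b²)² + 4a²b²t²))/2`,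
achieved at `β² = (1/2)[1 + (a²−b²)/√((a²−b²)² + 4a²b²t²)]`. -/
theorem stmt8 (a b t : ℝ) (ha : 0 ≤ a) (hb : 0 ≤ b) (hab : (a, b) ≠ (0, 0))
    (ht : t ∈ Set.Icc (0 : ℝ) 1)
    (g : ℝ → ℝ)
    (hg : g = fun β => β^2 * a^2 + (1 - β^2) * b^2 +
      2 * β * Real.sqrt (1 - β^2) * a * b * t)
    (βopt : ℝ) (hβopt : βopt = Real.sqrt ((1/2) * (1 +
      (a^2 - b^2) / Real.sqrt ((a^2 - b^2)^2 + 4 * a^2 * b^2 * t^2)))) :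
    βopt ∈ Set.Icc (0 : ℝ) 1 ∧
    βopt^2 = (1/2) * (1 + (a^2 - b^2) / Real.sqrt ((a^2 - b^2)^2 + 4 * a^2 * b^2 * t^2)) ∧
    g βopt = (a^2 + b^2 + Real.sqrt ((a^2 - b^2)^2 + 4 * a^2 * b^2 * t^2)) / 2 ∧
    ∀ β ∈ Set.Icc (0 : ℝ) 1,
      g β ≤ (a^2 + b^2 + Real.sqrt ((a^2 - b^2)^2 + 4 * a^2 * b^2 * t^2)) / 2 :=
  stmt8_general a b t ha hb ht g hg βopt hβopt
end

section
/- Let a, b > 0 and t ∈ [0, 1]. Define ΔSNR = (a² + b² + √(a⁴ + b⁴ + 2a²b²(2t² − 1))) / (2 max(a², b²)). Then ΔSNR is nondecreasing in t, and 1 ≤ ΔSNR ≤ 1 + min(a², b²)/max(a², b²) ≤ 2, with the lower bound achieved at t = 0 and the upper bound at t = 1. -/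
/-! With `x = a²` and `y = b²` the radicand is `(x - y)² + 4 x y t²`, which grows with `t ≥ 0`.
At `t = 0` its root is `|x - y|` and `x + y + |x - y| = 2 max x y`; at `t = 1` it is `x + y`,
and `x + y = max x y + min x y`. Monotonicity then squeezes every value on `[0, 1]` between these
two. -/

open Set

noncomputable def snrRatio (x y t : ℝ) : ℝ :=
  (x + y + √(x ^ 2 + y ^ 2 + 2 * x * y * (2 * t ^ 2 - 1))) / (2 * max x y)

lemma snrRatio_radicand_eq (x y t : ℝ) :
    x ^ 2 + y ^ 2 + 2 * x * y * (2 * t ^ 2 - 1) = (x - y) ^ 2 + 4 * (x * y) * t ^ 2 := by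
  ring

lemma monotoneOn_snrRatio {x y : ℝ} (hx : 0 ≤ x) (hy : 0 ≤ y) :
    MonotoneOn (snrRatio x y) (Ici 0) := by
  intro s hs t _ hst
  have hst2 : s ^ 2 ≤ t ^ 2 := pow_le_pow_left₀ hs hst 2
  unfold snrRatio
  rw [snrRatio_radicand_eq, snrRatio_radicand_eq]
  gcongr

lemma snrRatio_zero {x y : ℝ} (h : max x y ≠ 0) : snrRatio x y 0 = 1 := by
  have hroot : x + y + √(x ^ 2 + y ^ 2 + 2 * x * y * (2 * 0 ^ 2 - 1)) = 2 * max x y := by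
    have hsq : x ^ 2 + y ^ 2 + 2 * x * y * (2 * 0 ^ 2 - 1) = (x - y) ^ 2 := by ring
    rw [hsq, Real.sqrt_sq_eq_abs, ← max_sub_min_eq_abs', ← max_add_min x y]
    ring
  rw [snrRatio, hroot, div_self (mul_ne_zero two_ne_zero h)]

lemma snrRatio_one {x y : ℝ} (hxy : 0 ≤ x + y) (h : max x y ≠ 0) :
    snrRatio x y 1 = 1 + min x y / max x y := by
  have hroot : x + y + √(x ^ 2 + y ^ 2 + 2 * x * y * (2 * 1 ^ 2 - 1)) =
      2 * (max x y + min x y) := by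
    have hsq : x ^ 2 + y ^ 2 + 2 * x * y * (2 * 1 ^ 2 - 1) = (x + y) ^ 2 := by ring
    rw [hsq, Real.sqrt_sq hxy, ← max_add_min x y]
    ring
  rw [snrRatio, hroot]
  field_simp

theorem stmt9_general (a b : ℝ) (ha : 0 < a)
    (Δ : ℝ → ℝ)
    (hΔ : Δ = fun t => (a^2 + b^2 +
      Real.sqrt (a^4 + b^4 + 2 * a^2 * b^2 * (2 * t^2 - 1))) / (2 * max (a^2) (b^2))) :
    MonotoneOn Δ (Set.Icc (0 : ℝ) 1) ∧
    (∀ t ∈ Set.Icc (0 : ℝ) 1,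
      1 ≤ Δ t ∧ Δ t ≤ 1 + min (a^2) (b^2) / max (a^2) (b^2) ∧ Δ t ≤ 2) ∧
    Δ 0 = 1 ∧
    Δ 1 = 1 + min (a^2) (b^2) / max (a^2) (b^2) ∧
    1 + min (a^2) (b^2) / max (a^2) (b^2) ≤ 2 := by
  have hΔ' : Δ = snrRatio (a ^ 2) (b ^ 2) := by
    rw [hΔ]
    funext t
    simp only [snrRatio, ← pow_mul]
  have hmax : 0 < max (a ^ 2) (b ^ 2) := lt_max_of_lt_left (by positivity)
  have hmono : MonotoneOn Δ (Icc 0 1) :=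
    hΔ' ▸ (monotoneOn_snrRatio (sq_nonneg a) (sq_nonneg b)).mono Icc_subset_Ici_self
  have hΔ0 : Δ 0 = 1 := hΔ' ▸ snrRatio_zero hmax.ne'
  have hΔ1 : Δ 1 = 1 + min (a ^ 2) (b ^ 2) / max (a ^ 2) (b ^ 2) :=
    hΔ' ▸ snrRatio_one (by positivity) hmax.ne'
  have hle2 : 1 + min (a ^ 2) (b ^ 2) / max (a ^ 2) (b ^ 2) ≤ 2 := by
    linarith [div_le_one_of_le₀ (min_le_max (a := a ^ 2) (b := b ^ 2)) hmax.le]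
  refine ⟨hmono, fun t ht => ?_, hΔ0, hΔ1, hle2⟩
  have hlow := hmono (left_mem_Icc.2 zero_le_one) ht ht.1
  have hupp := hmono ht (right_mem_Icc.2 zero_le_one) ht.2
  rw [hΔ0] at hlow
  rw [hΔ1] at hupp
  exact ⟨hlow, hupp, hupp.trans hle2⟩

/-- SNR loss of dominant-path beamforming relative to optimal beamforming with
orthogonal transmit steering vectors: `ΔSNR` is nondecreasing in `t` on `[0,1]`,
and `1 ≤ ΔSNR ≤ 1 + min(a²,b²)/max(a²,b²) ≤ 2`, with the lower bound at `t = 0`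
and the upper bound at `t = 1`. -/
theorem stmt9 (a b : ℝ) (ha : 0 < a) (hb : 0 < b)
    (Δ : ℝ → ℝ)
    (hΔ : Δ = fun t => (a^2 + b^2 +
      Real.sqrt (a^4 + b^4 + 2 * a^2 * b^2 * (2 * t^2 - 1))) / (2 * max (a^2) (b^2))) :
    MonotoneOn Δ (Set.Icc (0 : ℝ) 1) ∧
    (∀ t ∈ Set.Icc (0 : ℝ) 1,
      1 ≤ Δ t ∧ Δ t ≤ 1 + min (a^2) (b^2) / max (a^2) (b^2) ∧ Δ t ≤ 2) ∧
    Δ 0 = 1 ∧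
    Δ 1 = 1 + min (a^2) (b^2) / max (a^2) (b^2) ∧
    1 + min (a^2) (b^2) / max (a^2) (b^2) ≤ 2 :=
  stmt9_general a b ha Δ hΔ
end

section
/- Let K ≥ 1, s ∈ [0,1], ν ∈ ℝ with the denominator positive. Then ΔSNR = 1 + (1 − s²)/(K² + s² + 2Ks cos ν) satisfies: ΔSNR ≤ 2 whenever cos ν ≥ 0; ΔSNR = 1 when s = 1; and ΔSNR is unbounded: for K = 1, ν = π and s < 1, ΔSNR = 1 + (1 − s²)/(1 − s)² = 1 + (1 + s)/(1 − s) → ∞ as s → 1. -/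
/-- SNR loss with parallel receive steering vectors:
`ΔSNR = 1 + (1−s²)/(K² + s² + 2Ks cos ν)` satisfies `ΔSNR ≤ 2` when `cos ν ≥ 0`,
equals `1` when `s = 1`, and for `K = 1`, `ν = π` it equals `1 + (1 + s)/(1−s)`,
which is unbounded as `s → 1⁻`. -/
theorem stmt18 (K s ν : ℝ) (hK : 1 ≤ K) (hs : s ∈ Set.Icc (0 : ℝ) 1)
    (hden : 0 < K^2 + s^2 + 2 * K * s * Real.cos ν)
    (ΔSNR : ℝ)
    (hΔ : ΔSNR = 1 + (1 - s^2) / (K^2 + s^2 + 2 * K * s * Real.cos ν)) :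
    (0 ≤ Real.cos ν → ΔSNR ≤ 2) ∧
    (s = 1 → ΔSNR = 1) ∧
    (∀ s' ∈ Set.Ico (0 : ℝ) 1,
      1 + (1 - s'^2) / (1^2 + s'^2 + 2 * 1 * s' * Real.cos Real.pi) =
        1 + (1 + s') / (1 - s')) ∧
    Filter.Tendsto (fun s' : ℝ => 1 + (1 + s') / (1 - s'))
      (nhdsWithin 1 (Set.Iio 1)) Filter.atTop := by
  obtain ⟨hs0, hs1⟩ := hs
  refine ⟨?_, ?_, ?_, ?_⟩
  · intro hcos
    rw [hΔ]
    have h1 : (1 - s^2) / (K^2 + s^2 + 2 * K * s * Real.cos ν) ≤ 1 := by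
      rw [div_le_one hden]
      nlinarith [mul_nonneg (mul_nonneg (by linarith : (0:ℝ) ≤ 2*K) hs0) hcos]
    linarith
  · intro h1
    rw [hΔ, h1]
    norm_num
  · intro s' hs'
    have h1 : (1:ℝ) - s' ≠ 0 := by
      have := hs'.2; intro h; nlinarith
    rw [Real.cos_pi]
    have hden' : 1^2 + s'^2 + 2 * 1 * s' * (-1) = (1 - s')^2 := by ring
    rw [hden']
    congr 1
    rw [div_eq_div_iff (by positivity) h1]
    ring
  · apply Filter.tendsto_atTop_add_const_left
    have h1 : Filter.Tendsto (fun s' : ℝ => 1 - s') (nhdsWithin 1 (Set.Iio 1))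
        (nhdsWithin 0 (Set.Ioi 0)) := by
      rw [tendsto_nhdsWithin_iff]
      constructor
      · have : Filter.Tendsto (fun s' : ℝ => 1 - s') (nhds 1) (nhds (1 - 1)) :=
          (continuous_const.sub continuous_id).tendsto 1
        simpa using this.mono_left nhdsWithin_le_nhds
      · filter_upwards [self_mem_nhdsWithin] with x hx
        simp only [Set.mem_Iio] at hx
        simp [Set.mem_Ioi]; linarith
    have h2 : Filter.Tendsto (fun s' : ℝ => (1 - s')⁻¹) (nhdsWithin 1 (Set.Iio 1))
        Filter.atTop := tendsto_inv_nhdsGT_zero.comp h1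
    have h3 : Filter.Tendsto (fun s' : ℝ => 1 + s') (nhdsWithin 1 (Set.Iio 1))
        (nhds 2) := by
      have : Filter.Tendsto (fun s' : ℝ => 1 + s') (nhds 1) (nhds (1 + 1)) :=
        (continuous_const.add continuous_id).tendsto 1
      simpa [one_add_one_eq_two] using this.mono_left nhdsWithin_le_nhds
    have := Filter.Tendsto.pos_mul_atTop (by norm_num : (0:ℝ) < 2) h3 h2
    simpa [div_eq_mul_inv] using this
end
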